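/- For every integer n ≥ 1 and every antichain 𝓐 in 𝔹∗^n, the cardinality of 𝓐 is at most C(n, ⌊n/3⌋) · 2^⌈2n/3⌉; moreover, the set 𝔹∗^n(⌈2n/3⌉) of words in 𝔹∗^n having exactly ⌈2n/3⌉ entries in 𝔹 is an antichain in 𝔹∗^n of exactly this cardinality. -/

import Mathlib

/-- The alphabet 𝔹• = {0, 1, ∗, •}. -/
inductive BB : Type
  | zero
  | one
  | star
  | reject
deriving DecidableEq

instance : Fintype BB :=
  ⟨{BB.zero, BB.one, BB.star, BB.reject}, fun x => by cases x <;> simp⟩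

/-- The partial order ≼ on 𝔹•: • ≼ 0, 1, ∗ and 0, 1 ≼ ∗ (0, 1 incomparable). -/
def BBle : BB → BB → Prop := fun a b => a = BB.reject ∨ b = BB.star ∨ a = b

/-- Componentwise extension of ≼ to words over 𝔹•. -/
def wordLe {n : ℕ} (u v : Fin n → BB) : Prop := ∀ j, BBle (u j) (v j)

/-!
Above a fixed vertex `f ∈ 𝔹ⁿ` (the words `v` with `f ≼ v`) the order is a Boolean lattice: such a
word is determined by its set of non-star coordinates, and `≼` is reverse inclusion of these sets.
So the LYM inequality holds there, and averaging it over all `2ⁿ` vertices, a word with `w` letters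
in `𝔹` lies above `2^(n-w)` of them, gives `∑_{v ∈ 𝓐} 1 / (C(n,w_v) 2^{w_v}) ≤ 1`. The weight
`C(n,w) 2^w` is maximal at `w = ⌈2n/3⌉`, since the ratio of consecutive weights is `2(n-w)/(w+1)`.
-/

open Finset

lemma card_filter_forall_apply {ι β : Type*} [Fintype ι] [DecidableEq ι] [Fintype β]
    (p : ι → β → Prop) [∀ i, DecidablePred (p i)]
    [DecidablePred fun f : ι → β => ∀ i, p i (f i)] :
    #(univ.filter fun f : ι → β => ∀ i, p i (f i)) = ∏ i, #(univ.filter (p i)) := by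
  rw [← Fintype.card_subtype, Fintype.card_congr (Equiv.subtypePiEquivPi), Fintype.card_pi]
  simp only [Fintype.card_subtype]

lemma choose_mul_two_pow_le_succ {n w : ℕ} (h : 3 * w + 1 ≤ 2 * n) :
    n.choose w * 2 ^ w ≤ n.choose (w + 1) * 2 ^ (w + 1) := by
  refine Nat.le_of_mul_le_mul_right ?_ w.succ_pos
  calc n.choose w * 2 ^ w * (w + 1) ≤ n.choose w * 2 ^ w * (2 * (n - w)) := by gcongr; omega
    _ = n.choose w * (n - w) * 2 ^ (w + 1) := by ring
    _ = n.choose (w + 1) * 2 ^ (w + 1) * (w + 1) := by rw [← Nat.choose_succ_right_eq]; ring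

lemma choose_succ_mul_two_pow_succ_le {n w : ℕ} (h : 2 * n ≤ 3 * w + 1) :
    n.choose (w + 1) * 2 ^ (w + 1) ≤ n.choose w * 2 ^ w := by
  refine Nat.le_of_mul_le_mul_right ?_ w.succ_pos
  calc n.choose (w + 1) * 2 ^ (w + 1) * (w + 1) = n.choose w * 2 ^ w * (2 * (n - w)) := by
        rw [mul_right_comm, Nat.choose_succ_right_eq]; ring
    _ ≤ n.choose w * 2 ^ w * (w + 1) := by gcongr; omega

lemma choose_mul_two_pow_le_at_two_thirds (n w : ℕ) :
    n.choose w * 2 ^ w ≤ n.choose ((2 * n + 2) / 3) * 2 ^ ((2 * n + 2) / 3) := by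
  set k := (2 * n + 2) / 3
  let f (m : ℕ) := n.choose m * 2 ^ m
  rcases le_total w k with h | h
  · refine monotoneOn_of_le_add_one (f := f) (Set.ordConnected_Iic (a := k))
      (fun a _ _ ha => ?_) (Set.mem_Iic.2 h) Set.self_mem_Iic h
    exact choose_mul_two_pow_le_succ (by simp only [Set.mem_Iic] at ha; omega)
  · refine antitoneOn_of_add_one_le (f := f) (Set.ordConnected_Ici (a := k))
      (fun a _ ha _ => ?_) Set.self_mem_Ici (Set.mem_Ici.2 h) h
    exact choose_succ_mul_two_pow_succ_le (by simp only [Set.mem_Ici] at ha; omega)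

instance : DecidableRel BBle := fun _ _ => inferInstanceAs (Decidable (_ ∨ _ ∨ _))

instance {n : ℕ} : DecidableRel (@wordLe n) := fun _ _ => inferInstanceAs (Decidable (∀ _, _))

def BB.ofBool : Bool → BB
  | false => BB.zero
  | true => BB.one

def cubeVertex {n : ℕ} (f : Fin n → Bool) : Fin n → BB := fun j => BB.ofBool (f j)

def nonStar {n : ℕ} (v : Fin n → BB) : Finset (Fin n) :=
  univ.filter (fun j => v j = BB.zero ∨ v j = BB.one)

section Words

variable {n : ℕ}

@[simp]
lemma mem_nonStar {v : Fin n → BB} {j : Fin n} :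
    j ∈ nonStar v ↔ v j = BB.zero ∨ v j = BB.one := by
  simp [nonStar]

lemma eq_star_of_not_mem_nonStar {v : Fin n → BB} {j : Fin n} (hv : v j ≠ BB.reject)
    (hj : j ∉ nonStar v) : v j = BB.star := by
  cases h : v j <;> simp_all

lemma nonStar_subset_of_wordLe {v w : Fin n → BB} (hv : ∀ j, v j ≠ BB.reject) (h : wordLe v w) :
    nonStar w ⊆ nonStar v := by
  intro j hj
  rcases h j with h | h | h
  · exact absurd h (hv j)
  · simp_all
  · rwa [mem_nonStar, h, ← mem_nonStar]

lemma eq_of_wordLe_of_card_nonStar_le {v w : Fin n → BB} (hv : ∀ j, v j ≠ BB.reject)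
    (h : wordLe v w) (hcard : #(nonStar v) ≤ #(nonStar w)) : v = w := by
  have hvw : nonStar w = nonStar v :=
    eq_of_subset_of_card_le (nonStar_subset_of_wordLe hv h) hcard
  funext j
  rcases h j with h | h | h
  · exact absurd h (hv j)
  · have hj : j ∉ nonStar w := by simp [h]
    rw [h, eq_star_of_not_mem_nonStar (hv j) (hvw ▸ hj)]
  · exact h

lemma eq_ofBool_of_BBle {b : Bool} {x : BB} (h : BBle (BB.ofBool b) x) (hx : x ≠ BB.star) :
    x = BB.ofBool b := by
  cases b <;> cases x <;> simp_all [BBle, BB.ofBool]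

lemma wordLe_of_nonStar_subset {f : Fin n → Bool} {v w : Fin n → BB}
    (hv : wordLe (cubeVertex f) v) (hw : wordLe (cubeVertex f) w) (hw' : ∀ j, w j ≠ BB.reject)
    (h : nonStar w ⊆ nonStar v) : wordLe v w := by
  intro j
  by_cases hj : j ∈ nonStar w
  · have hne : ∀ u : Fin n → BB, j ∈ nonStar u → u j ≠ BB.star := fun u hu => by
      rcases mem_nonStar.1 hu with h | h <;> simp [h]
    right; right
    rw [eq_ofBool_of_BBle (hv j) (hne v (h hj)), eq_ofBool_of_BBle (hw j) (hne w hj)]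
  · exact Or.inr (Or.inl (eq_star_of_not_mem_nonStar (hw' j) hj))

variable {𝕜 : Type*} [Semifield 𝕜] [LinearOrder 𝕜] [IsStrictOrderedRing 𝕜]

lemma sum_inv_choose_above_cubeVertex_le_one {A : Finset (Fin n → BB)}
    (hA : ∀ v ∈ A, ∀ j, v j ≠ BB.reject) (hanti : IsAntichain wordLe (A : Set (Fin n → BB)))
    (f : Fin n → Bool) :
    ∑ v ∈ A with wordLe (cubeVertex f) v, (n.choose #(nonStar v) : 𝕜)⁻¹ ≤ 1 := by
  set B := A.filter (wordLe (cubeVertex f))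
  have hB : ∀ v ∈ B, v ∈ A ∧ wordLe (cubeVertex f) v := fun v hv => mem_filter.1 hv
  have hle : ∀ v ∈ B, ∀ w ∈ B, nonStar w ⊆ nonStar v → wordLe v w := fun v hv w hw h =>
    wordLe_of_nonStar_subset (hB v hv).2 (hB w hw).2 (hA w (hB w hw).1) h
  have hinj : Set.InjOn nonStar (B : Set (Fin n → BB)) := fun v hv w hw h =>
    hanti.eq (hB v hv).1 (hB w hw).1 (hle v hv w hw h.ge)
  have himage : IsAntichain (· ⊆ ·) (SetLike.coe (B.image nonStar)) := by
    rintro _ hs _ ht hne hst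
    obtain ⟨v, hv, rfl⟩ := mem_image.1 hs
    obtain ⟨w, hw, rfl⟩ := mem_image.1 ht
    exact hne (congrArg nonStar (hanti.eq (hB w hw).1 (hB v hv).1 (hle w hw v hv hst)).symm)
  simpa [sum_image hinj] using
    lubell_yamamoto_meshalkin_inequality_sum_inv_choose (𝕜 := 𝕜) himage

lemma card_cubeVertex_le {v : Fin n → BB} (hv : ∀ j, v j ≠ BB.reject) :
    #(univ.filter fun f => wordLe (cubeVertex f) v) = 2 ^ (n - #(nonStar v)) := by
  have hcoord : ∀ j, #(univ.filter fun b => BBle (BB.ofBool b) (v j)) =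
      if j ∈ (nonStar v)ᶜ then 2 else 1 := by
    intro j
    have := hv j
    cases h : v j <;> simp_all <;> decide
  calc #(univ.filter fun f => wordLe (cubeVertex f) v)
      = ∏ j, #(univ.filter fun b => BBle (BB.ofBool b) (v j)) :=
        card_filter_forall_apply fun j b => BBle (BB.ofBool b) (v j)
    _ = ∏ j, if j ∈ (nonStar v)ᶜ then 2 else 1 := prod_congr rfl fun j _ => hcoord j
    _ = 2 ^ (n - #(nonStar v)) := by
        rw [prod_ite_mem, univ_inter, prod_const, card_compl, Fintype.card_fin]

lemma card_nonStar_le (v : Fin n → BB) : #(nonStar v) ≤ n := by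
  simpa using card_le_univ (nonStar v)

theorem sum_inv_choose_mul_two_pow_le_one {A : Finset (Fin n → BB)}
    (hA : ∀ v ∈ A, ∀ j, v j ≠ BB.reject) (hanti : IsAntichain wordLe (A : Set (Fin n → BB))) :
    ∑ v ∈ A, ((n.choose #(nonStar v) * 2 ^ #(nonStar v) : ℕ) : 𝕜)⁻¹ ≤ 1 := by
  have hvertices : ∀ v ∈ A,
      (2 : 𝕜) ^ n * ((n.choose #(nonStar v) * 2 ^ #(nonStar v) : ℕ) : 𝕜)⁻¹ =
        ∑ f, if wordLe (cubeVertex f) v then (n.choose #(nonStar v) : 𝕜)⁻¹ else 0 := by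
    intro v hv
    have hsplit : (2 : 𝕜) ^ n = 2 ^ (n - #(nonStar v)) * 2 ^ #(nonStar v) := by
      rw [← pow_add, Nat.sub_add_cancel (card_nonStar_le v)]
    rw [← sum_filter, sum_const, card_cubeVertex_le (hA v hv), nsmul_eq_mul, hsplit]
    push_cast
    field_simp
  have hpos : (0 : 𝕜) < 2 ^ n := by positivity
  refine le_of_mul_le_mul_left ?_ hpos
  calc (2 : 𝕜) ^ n * ∑ v ∈ A, ((n.choose #(nonStar v) * 2 ^ #(nonStar v) : ℕ) : 𝕜)⁻¹
      = ∑ v ∈ A, ∑ f, if wordLe (cubeVertex f) v then (n.choose #(nonStar v) : 𝕜)⁻¹ else 0 := by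
        rw [mul_sum]; exact sum_congr rfl hvertices
    _ = ∑ f : Fin n → Bool,
          ∑ v ∈ A with wordLe (cubeVertex f) v, (n.choose #(nonStar v) : 𝕜)⁻¹ := by
        rw [sum_comm]; simp only [sum_filter]
    _ ≤ ∑ _f : Fin n → Bool, 1 :=
        sum_le_sum fun f _ => sum_inv_choose_above_cubeVertex_le_one hA hanti f
    _ = 2 ^ n * 1 := by simp

theorem card_le_choose_mul_two_pow_of_isAntichain {A : Finset (Fin n → BB)}
    (hA : ∀ v ∈ A, ∀ j, v j ≠ BB.reject) (hanti : IsAntichain wordLe (A : Set (Fin n → BB))) :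
    #A ≤ n.choose ((2 * n + 2) / 3) * 2 ^ ((2 * n + 2) / 3) := by
  set M := n.choose ((2 * n + 2) / 3) * 2 ^ ((2 * n + 2) / 3)
  have hM : 0 < (M : ℚ≥0) :=
    Nat.cast_pos.2 (mul_pos (Nat.choose_pos (by omega)) (by positivity))
  have h := calc
    ∑ _v ∈ A, (M : ℚ≥0)⁻¹
    _ ≤ ∑ v ∈ A, ((n.choose #(nonStar v) * 2 ^ #(nonStar v) : ℕ) : ℚ≥0)⁻¹ := by
      gcongr with v hv
      · exact Nat.cast_pos.2 (mul_pos (Nat.choose_pos (card_nonStar_le v)) (by positivity))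
      · exact_mod_cast choose_mul_two_pow_le_at_two_thirds n _
    _ ≤ 1 := sum_inv_choose_mul_two_pow_le_one hA hanti
  simpa [mul_inv_le_iff₀' hM] using h

lemma card_filter_nonStar_eq (S : Finset (Fin n)) :
    #(univ.filter fun v : Fin n → BB => (∀ j, v j ≠ BB.reject) ∧ nonStar v = S) = 2 ^ #S := by
  have hcoord : ∀ j,
      #(univ.filter fun x => x ≠ BB.reject ∧ (x = BB.zero ∨ x = BB.one ↔ j ∈ S)) =
        if j ∈ S then 2 else 1 := by
    intro j
    by_cases hj : j ∈ S <;> simp only [hj] <;> decide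
  calc #(univ.filter fun v : Fin n → BB => (∀ j, v j ≠ BB.reject) ∧ nonStar v = S)
      = #(univ.filter fun v : Fin n → BB =>
          ∀ j, v j ≠ BB.reject ∧ (v j = BB.zero ∨ v j = BB.one ↔ j ∈ S)) := by
        congr 1; ext v; simp [forall_and, Finset.ext_iff]
    _ = ∏ j, if j ∈ S then 2 else 1 :=
        (card_filter_forall_apply _).trans (prod_congr rfl fun j _ => hcoord j)
    _ = 2 ^ #S := by rw [prod_ite_mem, univ_inter, prod_const]

def level (n k : ℕ) : Finset (Fin n → BB) :=
  univ.filter fun v => (∀ j, v j ≠ BB.reject) ∧ #(nonStar v) = k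

lemma isAntichain_level (k : ℕ) : IsAntichain wordLe (level n k : Set (Fin n → BB)) := by
  intro v hv w hw hne hle
  simp only [level, mem_coe, mem_filter, mem_univ, true_and] at hv hw
  exact hne (eq_of_wordLe_of_card_nonStar_le hv.1 hle (by rw [hv.2, hw.2]))

lemma card_level (k : ℕ) : #(level n k) = n.choose k * 2 ^ k := by
  have hmaps : ∀ v ∈ level n k, nonStar v ∈ powersetCard k (univ : Finset (Fin n)) := by
    intro v hv
    simpa [level] using (mem_filter.1 hv).2.2
  rw [card_eq_sum_card_fiberwise hmaps]
  have hfiber : ∀ S ∈ powersetCard k (univ : Finset (Fin n)),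
      #((level n k).filter fun v => nonStar v = S) = 2 ^ k := by
    intro S hS
    rw [← (mem_powersetCard.1 hS).2, ← card_filter_nonStar_eq, level, filter_filter]
    congr 1; ext v
    simp only [mem_filter, mem_univ, true_and]
    constructor
    · exact fun h => ⟨h.1.1, h.2⟩
    · rintro ⟨h, rfl⟩; exact ⟨⟨h, rfl⟩, rfl⟩
  rw [sum_congr rfl hfiber, sum_const, card_powersetCard, card_univ, Fintype.card_fin,
    smul_eq_mul]

end Words

theorem antichain_Bstar_bound_general (n : ℕ)
    (A : Finset (Fin n → BB))
    (hA : ∀ v ∈ A, ∀ j, v j ≠ BB.reject)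
    (hanti : ∀ v ∈ A, ∀ w ∈ A, wordLe v w → v = w) :
    A.card ≤ n.choose (n / 3) * 2 ^ ((2 * n + 2) / 3) ∧
    ∀ W : Finset (Fin n → BB),
      W = Finset.univ.filter (fun v =>
        (∀ j, v j ≠ BB.reject) ∧
        (Finset.univ.filter
            (fun j => v j = BB.zero ∨ v j = BB.one)).card = (2 * n + 2) / 3) →
      (∀ v ∈ W, ∀ w ∈ W, wordLe v w → v = w) ∧
      W.card = n.choose (n / 3) * 2 ^ ((2 * n + 2) / 3) := by
  have hchoose : n.choose (n / 3) = n.choose ((2 * n + 2) / 3) := by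
    rw [show n / 3 = n - (2 * n + 2) / 3 by omega, Nat.choose_symm (by omega)]
  rw [hchoose]
  refine ⟨card_le_choose_mul_two_pow_of_isAntichain hA
    fun v hv w hw hne hle => hne (hanti v hv w hw hle), ?_⟩
  rintro W rfl
  exact ⟨fun v hv w hw => (isAntichain_level _).eq hv hw, card_level _⟩

theorem antichain_Bstar_bound (n : ℕ) (hn : 1 ≤ n)
    (A : Finset (Fin n → BB))
    (hA : ∀ v ∈ A, ∀ j, v j ≠ BB.reject)
    (hanti : ∀ v ∈ A, ∀ w ∈ A, wordLe v w → v = w) :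
    A.card ≤ n.choose (n / 3) * 2 ^ ((2 * n + 2) / 3) ∧
    ∀ W : Finset (Fin n → BB),
      W = Finset.univ.filter (fun v =>
        (∀ j, v j ≠ BB.reject) ∧
        (Finset.univ.filter
            (fun j => v j = BB.zero ∨ v j = BB.one)).card = (2 * n + 2) / 3) →
      (∀ v ∈ W, ∀ w ∈ W, wordLe v w → v = w) ∧
      W.card = n.choose (n / 3) * 2 ^ ((2 * n + 2) / 3) :=
  antichain_Bstar_bound_general n A hA hanti
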